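/- arXiv:1501.03772 — 2 statements merged into one kernel-verified Lean document; each statement's English description precedes it below -/
import Mathlib

section
/- If the accounting units of all funds have the same values over [s,t], i.e. w_1(u) = w_2(u) = … = w_n(u) for every u ∈ [s,t], then for arbitrary strictly positive continuously differentiable unit-number functions k_i the average rate of return satisfies r̄(s,t) = (w_1(t) − w_1(s))/w_1(s). -/
open MeasureTheory Real

/-- The average rate of return of a group of `n` funds over `[a,b]`:
`r̄(a,b) = exp (∫_a^b ∑ i (k i u * w i u / ∑ j, k j u * w j u) * δ_i(u) du) - 1`,
where `δ_i(u) = (w i)'(u) / w i u`. -/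
noncomputable def avgReturn (n : ℕ) (w k : Fin n → ℝ → ℝ) (a b : ℝ) : ℝ :=
  Real.exp (∫ u in a..b,
    ∑ i, (k i u * w i u / ∑ j, k j u * w j u) * (deriv (w i) u / w i u)) - 1

/-- If the accounting units of all funds have the same values over
`[s,t]`, i.e. `w 1 u = w 2 u = ⋯ = w n u` for every `u ∈ [s,t]`, then for arbitrary
strictly positive continuously differentiable unit-number functions `k i` the average
rate of return satisfies `r̄(s,t) = (w 1 t - w 1 s) / w 1 s`. -/
theorem avgReturn_equal_unit_values
    (n : ℕ) (hn : 0 < n) (s t : ℝ) (hst : s < t)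
    (w k : Fin n → ℝ → ℝ)
    (hwpos : ∀ i, ∀ u ∈ Set.Icc s t, 0 < w i u)
    (hkpos : ∀ i, ∀ u ∈ Set.Icc s t, 0 < k i u)
    (hwdiff : ∀ i, ∀ u ∈ Set.Icc s t, DifferentiableAt ℝ (w i) u)
    (hkdiff : ∀ i, ∀ u ∈ Set.Icc s t, DifferentiableAt ℝ (k i) u)
    (hwderiv : ∀ i, ContinuousOn (deriv (w i)) (Set.Icc s t))
    (hkderiv : ∀ i, ContinuousOn (deriv (k i)) (Set.Icc s t))
    (hweq : ∀ i j : Fin n, ∀ u ∈ Set.Icc s t, w i u = w j u) :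
    avgReturn n w k s t =
      (w ⟨0, hn⟩ t - w ⟨0, hn⟩ s) / w ⟨0, hn⟩ s := by
  have : Nonempty (Fin n) := ⟨⟨0, hn⟩⟩
  set i0 : Fin n := ⟨0, hn⟩
  -- pointwise identity on the open interval
  have key : ∀ u ∈ Set.Ioo s t,
      (∑ i, (k i u * w i u / ∑ j, k j u * w j u) * (deriv (w i) u / w i u))
        = deriv (w i0) u / w i0 u := by
    intro u hu
    have hu' : u ∈ Set.Icc s t := Set.Ioo_subset_Icc_self hu
    have hderiv : ∀ i : Fin n, deriv (w i) u = deriv (w i0) u := by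
      intro i
      have hev : w i =ᶠ[nhds u] w i0 :=
        Filter.eventuallyEq_of_mem (Ioo_mem_nhds hu.1 hu.2)
          (fun x hx => hweq i i0 x (Set.Ioo_subset_Icc_self hx))
      exact hev.deriv_eq
    have hval : ∀ i : Fin n, w i u = w i0 u := fun i => hweq i i0 u hu'
    have hS : (∑ j, k j u * w j u) = (∑ j, k j u) * w i0 u := by
      rw [Finset.sum_mul]
      exact Finset.sum_congr rfl fun j _ => by rw [hval j]
    have hSpos : (0:ℝ) < ∑ j, k j u * w j u := by
      rw [hS]
      exact mul_pos (Finset.sum_pos (fun j _ => hkpos j u hu') Finset.univ_nonempty)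
        (hwpos i0 u hu')
    calc (∑ i, (k i u * w i u / ∑ j, k j u * w j u) * (deriv (w i) u / w i u))
        = ∑ i, (k i u * w i u / ∑ j, k j u * w j u) * (deriv (w i0) u / w i0 u) := by
          exact Finset.sum_congr rfl fun i _ => by rw [hderiv i, hval i]
      _ = ((∑ i, k i u * w i u) / ∑ j, k j u * w j u) * (deriv (w i0) u / w i0 u) := by
          rw [← Finset.sum_mul, ← Finset.sum_div]
      _ = deriv (w i0) u / w i0 u := by
          rw [div_self hSpos.ne', one_mul]
  -- replace the integral
  have hint : (∫ u in s..t,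
      ∑ i, (k i u * w i u / ∑ j, k j u * w j u) * (deriv (w i) u / w i u))
      = ∫ u in s..t, deriv (w i0) u / w i0 u := by
    apply intervalIntegral.integral_congr_ae
    have h1 : ∀ᵐ x : ℝ, x ∉ ({t} : Set ℝ) :=
      measure_eq_zero_iff_ae_notMem.mp (measure_singleton t)
    filter_upwards [h1] with x hx hmem
    rw [Set.uIoc_of_le hst.le] at hmem
    exact key x ⟨hmem.1, lt_of_le_of_ne hmem.2 (by simpa using hx)⟩
  have hwcont : ContinuousOn (w i0) (Set.Icc s t) :=
    fun u hu => (hwdiff i0 u hu).continuousAt.continuousWithinAt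
  have hI : IntervalIntegrable (fun u => deriv (w i0) u / w i0 u) volume s t := by
    apply ContinuousOn.intervalIntegrable
    rw [Set.uIcc_of_le hst.le]
    exact (hwderiv i0).div hwcont (fun u hu => (hwpos i0 u hu).ne')
  have hFTC : (∫ u in s..t, deriv (w i0) u / w i0 u)
      = Real.log (w i0 t) - Real.log (w i0 s) := by
    apply intervalIntegral.integral_eq_sub_of_hasDerivAt _ hI
    intro u hu
    rw [Set.uIcc_of_le hst.le] at hu
    exact ((hwdiff i0 u hu).hasDerivAt).log (hwpos i0 u hu).ne'
  have hws : (0:ℝ) < w i0 s := hwpos i0 s ⟨le_refl s, hst.le⟩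
  have hwt : (0:ℝ) < w i0 t := hwpos i0 t ⟨hst.le, le_refl t⟩
  rw [avgReturn, hint, hFTC, ← Real.log_div hwt.ne' hws.ne', Real.exp_log (div_pos hwt hws)]
  field_simp
end

section
/- If the number of units of every fund is constant over [s,t], i.e. k_i(u) = c_i > 0 for all u ∈ [s,t] and each i, then the average rate of return equals the rate of growth of the total wealth: r̄(s,t) = (A(t) − A(s))/A(s), where A(u) = Σ_{i=1}^n k_i(u) w_i(u). -/
open MeasureTheory Real

/-! With constant unit numbers `c i`, the wealth-weighted average of the fund rates
`w i' / w i` is the logarithmic derivative `B' / B` of the total wealth `B = ∑ i, c i * w i`.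
Hence the exponent in `avgReturn` is `∫ B' / B = log B(t) - log B(s)`, and
`exp (log B(t) - log B(s)) - 1 = (B(t) - B(s)) / B(s)`. -/

open Set

theorem sum_mul_div_sum_mul_div_eq {ι : Type*} [Fintype ι] (c v v' : ι → ℝ)
    (hv : ∀ i, v i ≠ 0) :
    ∑ i, (c i * v i / ∑ j, c j * v j) * (v' i / v i) = (∑ i, c i * v' i) / ∑ j, c j * v j := by
  rw [Finset.sum_div]
  refine Finset.sum_congr rfl fun i _ => ?_
  field_simp [hv i]

theorem integral_div_eq_log_sub_log {f f' : ℝ → ℝ} {a b : ℝ}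
    (hf : ∀ x ∈ uIcc a b, HasDerivAt f (f' x) x) (hf' : ContinuousOn f' (uIcc a b))
    (hf0 : ∀ x ∈ uIcc a b, f x ≠ 0) :
    ∫ x in a..b, f' x / f x = log (f b) - log (f a) := by
  have hcont : ContinuousOn f (uIcc a b) := fun x hx => (hf x hx).continuousAt.continuousWithinAt
  exact intervalIntegral.integral_eq_sub_of_hasDerivAt (fun x hx => (hf x hx).log (hf0 x hx))
    ((hf'.div hcont hf0).intervalIntegrable)

theorem exp_log_sub_log_sub_one {x y : ℝ} (hx : 0 < x) (hy : 0 < y) :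
    exp (log x - log y) - 1 = (x - y) / y := by
  rw [exp_sub, exp_log hx, exp_log hy, sub_div, div_self hy.ne']

theorem avgReturn_constant_units_general
    (n : ℕ) (s t : ℝ) (hst : s < t)
    (w k : Fin n → ℝ → ℝ)
    (hwpos : ∀ i, ∀ u ∈ Set.Icc s t, 0 < w i u)
    (hwdiff : ∀ i, ∀ u ∈ Set.Icc s t, DifferentiableAt ℝ (w i) u)
    (hwderiv : ∀ i, ContinuousOn (deriv (w i)) (Set.Icc s t))
    (c : Fin n → ℝ) (hc : ∀ i, 0 < c i)
    (hk : ∀ i, ∀ u ∈ Set.Icc s t, k i u = c i)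
    (A : ℝ → ℝ) (hA : A = fun u => ∑ i, k i u * w i u) :
    avgReturn n w k s t = (A t - A s) / A s := by
  rcases isEmpty_or_nonempty (Fin n) with _ | _
  · simp [avgReturn, hA]
  rw [← uIcc_of_le hst.le] at hwpos hwdiff hwderiv hk
  set B : ℝ → ℝ := fun u => ∑ i, c i * w i u
  have hAB : ∀ u ∈ uIcc s t, A u = B u := fun u hu => by
    simp only [hA, B, hk _ u hu]
  have hB : ∀ u ∈ uIcc s t, 0 < B u := fun u hu =>
    Finset.sum_pos (fun i _ => mul_pos (hc i) (hwpos i u hu)) Finset.univ_nonempty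
  have hlog : ∫ u in s..t, (∑ i, c i * deriv (w i) u) / B u = log (B t) - log (B s) :=
    integral_div_eq_log_sub_log
      (fun u hu => HasDerivAt.fun_sum fun i _ => (hwdiff i u hu).hasDerivAt.const_mul (c i))
      (continuousOn_finsetSum _ fun i _ => (hwderiv i).const_smul (c i))
      (fun u hu => (hB u hu).ne')
  have hs : s ∈ uIcc s t := left_mem_uIcc
  have ht : t ∈ uIcc s t := right_mem_uIcc
  rw [avgReturn, hAB s hs, hAB t ht, ← exp_log_sub_log_sub_one (hB t ht) (hB s hs), ← hlog,
    intervalIntegral.integral_congr fun u hu => ?_]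
  simp only [hk _ u hu]
  exact sum_mul_div_sum_mul_div_eq c (w · u) (fun i => deriv (w i) u) fun i => (hwpos i u hu).ne'

/-- If the number of units of every fund is constant over `[s,t]`, i.e.
`k i u = c i > 0` for all `u ∈ [s,t]`, then the average rate of return equals the
rate of growth of the total wealth `A u = ∑ i, k i u * w i u`:
`r̄(s,t) = (A t - A s) / A s`. -/
theorem avgReturn_constant_units
    (n : ℕ) (s t : ℝ) (hst : s < t)
    (w k : Fin n → ℝ → ℝ)
    (hwpos : ∀ i, ∀ u ∈ Set.Icc s t, 0 < w i u)
    (hkpos : ∀ i, ∀ u ∈ Set.Icc s t, 0 < k i u)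
    (hwdiff : ∀ i, ∀ u ∈ Set.Icc s t, DifferentiableAt ℝ (w i) u)
    (hkdiff : ∀ i, ∀ u ∈ Set.Icc s t, DifferentiableAt ℝ (k i) u)
    (hwderiv : ∀ i, ContinuousOn (deriv (w i)) (Set.Icc s t))
    (hkderiv : ∀ i, ContinuousOn (deriv (k i)) (Set.Icc s t))
    (c : Fin n → ℝ) (hc : ∀ i, 0 < c i)
    (hk : ∀ i, ∀ u ∈ Set.Icc s t, k i u = c i)
    (A : ℝ → ℝ) (hA : A = fun u => ∑ i, k i u * w i u) :
    avgReturn n w k s t = (A t - A s) / A s :=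
  avgReturn_constant_units_general n s t hst w k hwpos hwdiff hwderiv c hc hk A hA
end
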